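/- Let G₂(x,y) = (−(1/4)·x³/y⁴ + (1/12)·x/y² + (1/6)·(1/x), (1/8)·x²/y³ − (1/12)·y/x² − (1/24)·(1/y)). For x > 0 and y > 0, one has G₂(x,y) = (0,0) if and only if x = y. In particular, in the case aμ = −1 the only equilibria of the normalized flow among Berger metrics are round metrics on S³. -/

import Mathlib

open Real Filter Set Topology
open scoped ENNReal

/-- The vector field of the volume-normalized spinor-flow system on Berger spheres
in the case `aμ = -1`. -/
noncomputable def G2 (x y : ℝ) : ℝ × ℝ :=
  (-(1/4) * x^3 / y^4 + (1/12) * x / y^2 + (1/6) * (1/x),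
   (1/8) * x^2 / y^3 - (1/12) * y / x^2 - (1/24) * (1/y))

/-! The first component of `G2` factors as `(y² - x²)(3x² + 2y²) / (12 x y⁴)`, and the second
factor is positive, so it vanishes exactly on `x² = y²`; on the diagonal both components vanish
because `-1/4 + 1/12 + 1/6 = 0` and `1/8 - 1/12 - 1/24 = 0`. -/

theorem G2_fst_eq {x y : ℝ} (hx : x ≠ 0) (hy : y ≠ 0) :
    (G2 x y).1 = (y ^ 2 - x ^ 2) * (3 * x ^ 2 + 2 * y ^ 2) / (12 * x * y ^ 4) := by
  rw [G2]
  field_simp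
  ring

theorem sq_eq_sq_of_G2_fst_eq_zero {x y : ℝ} (hx : x ≠ 0) (hy : y ≠ 0) (h : (G2 x y).1 = 0) :
    x ^ 2 = y ^ 2 := by
  have hden : 12 * x * y ^ 4 ≠ 0 := by positivity
  have hpos : 3 * x ^ 2 + 2 * y ^ 2 ≠ 0 := by positivity
  rw [G2_fst_eq hx hy, div_eq_zero_iff, or_iff_left hden, mul_eq_zero, or_iff_left hpos] at h
  exact (sub_eq_zero.mp h).symm

theorem G2_self (x : ℝ) : G2 x x = (0, 0) := by
  rcases eq_or_ne x 0 with rfl | hx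
  · simp [G2]
  · rw [G2, Prod.mk.injEq]
    constructor <;> field_simp <;> ring

/-- For `x, y > 0`, `G₂(x,y) = 0` iff `x = y`: in the case `aμ = -1` the only
equilibria of the normalized flow among Berger metrics are the round metrics. -/
theorem G2_equilibria (x y : ℝ) (hx : 0 < x) (hy : 0 < y) :
    G2 x y = (0, 0) ↔ x = y := by
  constructor
  · intro h
    have hsq := sq_eq_sq_of_G2_fst_eq_zero hx.ne' hy.ne' (congrArg Prod.fst h)
    exact (pow_left_inj₀ hx.le hy.le two_ne_zero).mp hsq
  · rintro rfl
    exact G2_self x
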